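/- arXiv:2007.05567 — 2 statements merged into one kernel-verified Lean document; each statement's English description precedes it below -/
import Mathlib

section
/- Let S = ⟨a_1,…,a_n⟩ ⊆ ℤ^m ⊕ T be a reduced monoid and S̃ = ⟨(a_1,1),…,(a_n,1)⟩ ⊆ ℤ^{m+1} ⊕ T. Then: (1) c_eq(S) = 0 if and only if the lattice ideal I_{S̃} is the zero ideal; (2) if I_{S̃} ≠ 0 and {f_1,…,f_s} is a binomial generating set of I_{S̃}, then c_eq(S) ≤ max_{1≤i≤s} deg(f_i); (3) if {f_1,…,f_s} is a binomial minimal generating set of I_{S̃}, then c_eq(S) = max_{1≤i≤s} deg(f_i), where deg denotes the total degree. -/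
/-!
Factorizations of equal length of the same element of `S` are exactly the exponent vectors of
equal `S̃`-degree, i.e. the pairs whose binomial lies in `I_{S̃}`. If binomials
`f_i = x^{α_i} - x^{β_i}` generate `I_{S̃}`, such a binomial `x^u - x^v` forces `u` and `v` to be
congruent modulo the pairs `(α_i, β_i)`, and every elementary move `e + α_i ↦ e + β_i` has
distance at most `deg f_i`. This gives `c_eq(S) ≤ max deg f_i`, and `c_eq(S) = 0` exactly when no
two distinct vectors have the same `S̃`-degree.

Conversely, if `c_eq(S) < deg f_i`, then `α_i` and `β_i` are joined by a chain whose steps have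
distance `< deg f_i`, so every step `x^c (x^{u'} - x^{v'})` has a nonconstant common factor `x^c`
and `f_i ∈ 𝔪 I_{S̃}`. The `S̃`-grading is positive thanks to the last coordinate, so
comparing homogeneous components in `f_i = Σ p_j f_j` with all `p_j ∈ 𝔪` puts `f_i` in the
ideal of the other generators, contradicting minimality.
-/

open MvPolynomial

/-- The `S`-degree of an exponent vector. -/
def degS {n : ℕ} {G : Type*} [AddCommMonoid G] (a : Fin n → G) (lam : Fin n → ℕ) : G :=
  ∑ i, lam i • a i

/-- The lattice ideal of the monoid generated by `a`. -/
noncomputable def latticeIdeal (K : Type) [Field K] {n : ℕ} {G : Type*} [AddCommMonoid G]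
    (a : Fin n → G) : Ideal (MvPolynomial (Fin n) K) :=
  Ideal.span {f | ∃ α β : Fin n →₀ ℕ, degS a ⇑α = degS a ⇑β ∧
    f = monomial α (1 : K) - monomial β 1}

/-- The distance between two factorizations. -/
def factDist {n : ℕ} (lam nu : Fin n → ℕ) : ℕ :=
  ∑ i, (lam i - min (lam i) (nu i))

/-- An `N`-chain of factorizations of `b`, all of the same length, joining `lam` to `nu`. -/
def IsEqChain {n : ℕ} {G : Type*} [AddCommMonoid G] (a : Fin n → G) (b : G) (N : ℕ∞)
    (lam nu : Fin n → ℕ) : Prop :=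
  ∃ k, ∃ γ : Fin (k + 1) → (Fin n → ℕ),
    γ 0 = lam ∧ γ (Fin.last k) = nu ∧
    (∀ j, degS a (γ j) = b ∧ ∑ i, γ j i = ∑ i, lam i) ∧
    (∀ j : Fin k, (factDist (γ j.castSucc) (γ j.succ) : ℕ∞) ≤ N)

/-- The equal catenary degree of an element `b`: the least `N ∈ ℕ ∪ {∞}` such that
any two factorizations of `b` of the same length are joined by an `N`-chain. -/
noncomputable def ceqElem {n : ℕ} {G : Type*} [AddCommMonoid G] (a : Fin n → G) (b : G) :
    ℕ∞ :=
  sInf {N : ℕ∞ | ∀ lam nu : Fin n → ℕ, degS a lam = b → degS a nu = b →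
    ∑ i, lam i = ∑ i, nu i → IsEqChain a b N lam nu}

/-- The equal catenary degree of the monoid generated by `a`. -/
noncomputable def ceq {n : ℕ} {G : Type*} [AddCommMonoid G] (a : Fin n → G) : ℕ∞ :=
  ⨆ b ∈ AddSubmonoid.closure (Set.range a), ceqElem a b

open Relation

section WeightedHomogeneous

variable {σ R M : Type*} [CommSemiring R]

theorem MvPolynomial.IsWeightedHomogeneous.weightedHomogeneousComponent_add_mul
    [AddCancelCommMonoid M] {w : σ → M} {g : MvPolynomial σ R} {d : M}
    (hg : IsWeightedHomogeneous w g d)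
    (p : MvPolynomial σ R) (m : M) :
    weightedHomogeneousComponent w (m + d) (p * g) = weightedHomogeneousComponent w m p * g := by
  classical
  let := weightedGradedAlgebra R w
  simpa only [← weightedDecomposition.decompose'_apply, DirectSum.Decomposition.decompose'_eq]
    using DirectSum.coe_decompose_mul_add_of_right_mem (weightedHomogeneousSubmodule R w)
      (a := p) (i := m) hg

theorem weightedHomogeneousComponent_zero_eq_C_coeff_zero [AddCommMonoid M] {w : σ → M}
    (hw : ∀ u : σ →₀ ℕ, Finsupp.weight w u = 0 → u = 0) (p : MvPolynomial σ R) :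
    weightedHomogeneousComponent w 0 p = C (coeff 0 p) := by
  classical
  ext u
  rw [coeff_weightedHomogeneousComponent, coeff_C]
  by_cases hu : u = 0
  · simp [hu]
  · rw [if_neg (mt (hw u) hu), if_neg (Ne.symm hu)]

theorem mem_span_others_of_mem_ker_constantCoeff_smul_span [AddCommGroup M] {ι : Type*}
    {w : σ → M} (hw : ∀ u : σ →₀ ℕ, Finsupp.weight w u = 0 → u = 0)
    {f : ι → MvPolynomial σ R} {d : ι → M} (hf : ∀ i, IsWeightedHomogeneous w (f i) (d i))
    {i₀ : ι}
    (h : f i₀ ∈ RingHom.ker (constantCoeff (σ := σ) (R := R)) • Ideal.span (Set.range f)) :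
    f i₀ ∈ Ideal.span {g | ∃ i, i ≠ i₀ ∧ g = f i} := by
  classical
  obtain ⟨c, hc, hsum⟩ := (Submodule.mem_ideal_smul_span_iff_exists_sum _ f _).mp h
  have hcomponents :
      f i₀ = c.sum fun i p => weightedHomogeneousComponent w (d i₀ - d i) p * f i := by
    conv_lhs => rw [← (hf i₀).weightedHomogeneousComponent_same, ← hsum]
    simp only [Finsupp.sum, map_sum, smul_eq_mul]
    refine Finset.sum_congr rfl fun i _ => ?_
    rw [← (hf i).weightedHomogeneousComponent_add_mul, sub_add_cancel]
  rw [hcomponents]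
  refine Ideal.sum_mem _ fun i _ => ?_
  dsimp only
  by_cases hi : i = i₀
  · rw [hi, sub_self, weightedHomogeneousComponent_zero_eq_C_coeff_zero hw, ← constantCoeff_eq,
      RingHom.mem_ker.mp (hc i₀), C_0, zero_mul]
    exact Ideal.zero_mem _
  · exact Ideal.mul_mem_left _ _ (Ideal.subset_span ⟨i, hi, rfl⟩)

end WeightedHomogeneous

/-- The ideal is killed by the map to the monoid algebra of the quotient monoid. -/
theorem addConGen_of_monomial_sub_mem_span {σ ι R : Type*} [CommRing R] [Nontrivial R]
    {gα gβ : ι → σ →₀ ℕ} {u v : σ →₀ ℕ}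
    (h : monomial u (1 : R) - monomial v 1 ∈
      Ideal.span (Set.range fun i => monomial (gα i) (1 : R) - monomial (gβ i) 1)) :
    addConGen (fun x y => ∃ i, x = gα i ∧ y = gβ i) u v := by
  set c := addConGen fun x y : σ →₀ ℕ => ∃ i, x = gα i ∧ y = gβ i
  let ψ : MvPolynomial σ R →+* AddMonoidAlgebra R c.Quotient :=
    AddMonoidAlgebra.mapDomainRingHom R c.mk'
  have hψ : ∀ w, ψ (monomial w 1) = AddMonoidAlgebra.single (c.mk' w) 1 := by
    intro w
    simp [ψ, monomial]
  have hker : Ideal.span (Set.range fun i => monomial (gα i) (1 : R) - monomial (gβ i) 1) ≤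
      RingHom.ker ψ := by
    rw [Ideal.span_le]
    rintro _ ⟨i, rfl⟩
    have : c (gα i) (gβ i) := AddConGen.Rel.of _ _ ⟨i, rfl, rfl⟩
    simp [hψ, c.eq.mpr this]
  have hψuv := hker h
  rw [RingHom.mem_ker, map_sub, hψ, hψ, sub_eq_zero] at hψuv
  exact c.eq.mp (AddMonoidAlgebra.single_left_injective one_ne_zero hψuv)

section Factorizations

variable {n : ℕ} {G : Type*} [AddCommMonoid G]

/-- The generators `(a_j, 1)` of `S̃`. -/
def homogenize (a : Fin n → G) : Fin n → G × ℤ := fun j => (a j, 1)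

theorem degS_add (a : Fin n → G) (f g : Fin n → ℕ) :
    degS a (f + g) = degS a f + degS a g := by
  simp [degS, add_smul, Finset.sum_add_distrib]

theorem degS_homogenize (a : Fin n → G) (f : Fin n → ℕ) :
    degS (homogenize a) f = (degS a f, ((∑ i, f i : ℕ) : ℤ)) := by
  ext <;> simp [degS, homogenize, Prod.fst_sum, Prod.snd_sum]

theorem degS_homogenize_eq_iff {a : Fin n → G} {f g : Fin n → ℕ} :
    degS (homogenize a) f = degS (homogenize a) g ↔
      degS a f = degS a g ∧ ∑ i, f i = ∑ i, g i := by
  rw [degS_homogenize, degS_homogenize, Prod.ext_iff, Nat.cast_inj]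

theorem degS_mem_closure (a : Fin n → G) (f : Fin n → ℕ) :
    degS a f ∈ AddSubmonoid.closure (Set.range a) :=
  AddSubmonoid.sum_mem _ fun i _ =>
    AddSubmonoid.nsmul_mem _ (AddSubmonoid.subset_closure (Set.mem_range_self i)) _

theorem weight_eq_degS (w : Fin n → G) (u : Fin n →₀ ℕ) :
    Finsupp.weight w u = degS w u := by
  rw [Finsupp.weight_apply]
  exact Finsupp.sum_fintype _ _ (by simp)

theorem eq_zero_of_weight_homogenize_eq_zero {a : Fin n → G} {u : Fin n →₀ ℕ}
    (h : Finsupp.weight (homogenize a) u = 0) : u = 0 := by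
  rw [weight_eq_degS, degS_homogenize, Prod.ext_iff] at h
  have hsum : ∑ i, u i = 0 := Nat.cast_eq_zero.mp h.2
  ext i
  exact Finset.sum_eq_zero_iff.mp hsum i (Finset.mem_univ i)

theorem factDist_add_sum_min (f g : Fin n → ℕ) :
    factDist f g + ∑ i, min (f i) (g i) = ∑ i, f i := by
  rw [factDist, ← Finset.sum_add_distrib]
  exact Finset.sum_congr rfl fun i _ => Nat.sub_add_cancel (min_le_left _ _)

theorem factDist_le_sum (f g : Fin n → ℕ) : factDist f g ≤ ∑ i, f i :=
  le_of_add_le_left (factDist_add_sum_min f g).le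

theorem factDist_comm_of_sum_eq {f g : Fin n → ℕ} (h : ∑ i, f i = ∑ i, g i) :
    factDist f g = factDist g f := by
  have hf := factDist_add_sum_min f g
  have hg := factDist_add_sum_min g f
  simp only [min_comm] at hg
  omega

theorem factDist_add_left (e f g : Fin n → ℕ) : factDist (e + f) (e + g) = factDist f g := by
  unfold factDist
  refine Finset.sum_congr rfl fun i _ => ?_
  simp only [Pi.add_apply]
  omega

theorem eq_of_factDist_eq_zero {f g : Fin n → ℕ} (hsum : ∑ i, f i = ∑ i, g i)
    (h : factDist f g = 0) : f = g := by
  have hle : ∀ i, f i ≤ g i := fun i => by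
    have := Finset.sum_eq_zero_iff.mp h i (Finset.mem_univ i)
    omega
  funext i
  exact (Finset.sum_eq_sum_iff_of_le fun i _ => hle i).mp hsum i (Finset.mem_univ i)

/-- A step of an `N`-chain: equal `S̃`-degree means the same element of `S` and the same
length. -/
def ChainStep (a : Fin n → G) (N : ℕ∞) (u v : Fin n →₀ ℕ) : Prop :=
  degS (homogenize a) u = degS (homogenize a) v ∧ (factDist u v : ℕ∞) ≤ N

variable {a : Fin n → G} {N : ℕ∞}

instance : Std.Symm (ChainStep a N) where
  symm _ _ h := ⟨h.1.symm, factDist_comm_of_sum_eq (degS_homogenize_eq_iff.mp h.1).2 ▸ h.2⟩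

theorem ChainStep.add_left {u v : Fin n →₀ ℕ} (e : Fin n →₀ ℕ) (h : ChainStep a N u v) :
    ChainStep a N (e + u) (e + v) := by
  simp only [ChainStep, Finsupp.coe_add, degS_add, factDist_add_left]
  exact ⟨congrArg _ h.1, h.2⟩

theorem ChainStep.eq {u v : Fin n →₀ ℕ} (h : ChainStep a 0 u v) : u = v :=
  DFunLike.coe_injective <| eq_of_factDist_eq_zero (degS_homogenize_eq_iff.mp h.1).2
    (by exact_mod_cast nonpos_iff_eq_zero.mp h.2)

theorem degS_homogenize_eq_of_reflTransGen {u v : Fin n →₀ ℕ}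
    (h : ReflTransGen (ChainStep a N) u v) : degS (homogenize a) u = degS (homogenize a) v := by
  induction h with
  | refl => rfl
  | tail _ hstep ih => exact ih.trans hstep.1

def chainCon (a : Fin n → G) (N : ℕ∞) : AddCon (Fin n →₀ ℕ) where
  r := ReflTransGen (ChainStep a N)
  iseqv := ⟨fun _ => .refl, Std.Symm.symm _ _, .trans⟩
  add' {w x y z} hwx hyz := by
    refine (hwx.lift (· + y) fun _ _ h => ?_).trans (hyz.lift (x + ·) fun _ _ h => h.add_left x)
    simpa only [add_comm _ y] using h.add_left y

theorem IsEqChain.snoc {b : G} {f g g' : Fin n → ℕ} (h : IsEqChain a b N f g)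
    (hdeg : degS a g' = b) (hsum : ∑ i, g' i = ∑ i, f i)
    (hdist : (factDist g g' : ℕ∞) ≤ N) :
    IsEqChain a b N f g' := by
  obtain ⟨k, γ, h0, hl, hγ, hd⟩ := h
  refine ⟨k + 1, Fin.snoc γ g', ?_, Fin.snoc_last .., Fin.lastCases ?_ fun j => ?_,
    Fin.lastCases ?_ fun j => ?_⟩
  · rw [← Fin.castSucc_zero, Fin.snoc_castSucc, h0]
  · rw [Fin.snoc_last]; exact ⟨hdeg, hsum⟩
  · rw [Fin.snoc_castSucc]; exact hγ j
  · rwa [Fin.succ_last, Fin.snoc_last, Fin.snoc_castSucc, hl]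
  · rw [Fin.succ_castSucc, Fin.snoc_castSucc, Fin.snoc_castSucc]; exact hd j

theorem isEqChain_iff {b : G} {u v : Fin n →₀ ℕ} :
    IsEqChain a b N u v ↔ degS a u = b ∧ ReflTransGen (ChainStep a N) u v := by
  constructor
  · rintro ⟨k, γ, h0, hl, hγ, hd⟩
    let U : Fin (k + 1) → Fin n →₀ ℕ := fun j => Finsupp.equivFunOnFinite.symm (γ j)
    have hU : ∀ j, degS (homogenize a) (U j) = degS (homogenize a) u := fun j =>
      degS_homogenize_eq_iff.mpr ⟨(hγ j).1.trans (h0 ▸ (hγ 0).1).symm, (hγ j).2⟩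
    have hreach : ∀ j, ReflTransGen (ChainStep a N) u (U j) := by
      refine Fin.induction ?_ fun j ih => ih.tail ⟨(hU _).trans (hU _).symm, hd j⟩
      rw [show U 0 = u from DFunLike.coe_injective h0]
    refine ⟨h0 ▸ (hγ 0).1, ?_⟩
    simpa [show U (Fin.last k) = v from DFunLike.coe_injective hl] using hreach (Fin.last k)
  · rintro ⟨hb, h⟩
    induction h with
    | refl => exact ⟨0, fun _ => u, rfl, rfl, fun _ => ⟨hb, rfl⟩, fun j => j.elim0⟩
    | @tail w v huw hwv ih =>
      obtain ⟨hdeg, hsum⟩ :=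
        degS_homogenize_eq_iff.mp (degS_homogenize_eq_of_reflTransGen (huw.tail hwv))
      exact ih.snoc (hdeg ▸ hb) hsum.symm hwv.2

theorem ceq_le_of_forall_reflTransGen
    (h : ∀ u v : Fin n →₀ ℕ, degS (homogenize a) u = degS (homogenize a) v →
      ReflTransGen (ChainStep a N) u v) :
    ceq a ≤ N := by
  refine iSup₂_le fun b _ => sInf_le fun f g hf hg hsum => ?_
  obtain ⟨u, rfl⟩ : ∃ u : Fin n →₀ ℕ, ⇑u = f :=
    ⟨Finsupp.equivFunOnFinite.symm f, rfl⟩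
  obtain ⟨v, rfl⟩ : ∃ v : Fin n →₀ ℕ, ⇑v = g :=
    ⟨Finsupp.equivFunOnFinite.symm g, rfl⟩
  exact isEqChain_iff.mpr ⟨hf, h u v (degS_homogenize_eq_iff.mpr ⟨hf.trans hg.symm, hsum⟩)⟩

theorem exists_reflTransGen_of_ceq_lt {D : ℕ∞} (hD : ceq a < D) {u v : Fin n →₀ ℕ}
    (huv : degS (homogenize a) u = degS (homogenize a) v) :
    ∃ N < D, ReflTransGen (ChainStep a N) u v := by
  obtain ⟨hdeg, hsum⟩ := degS_homogenize_eq_iff.mp huv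
  have hlt : ceqElem a (degS a u) < D :=
    (le_biSup (ceqElem a) (degS_mem_closure a u)).trans_lt hD
  obtain ⟨N, hN, hND⟩ := sInf_lt_iff.mp hlt
  exact ⟨N, hND, (isEqChain_iff.mp (hN u v rfl hdeg.symm hsum)).2⟩

end Factorizations

section CatenaryDegree

variable {n : ℕ} {G : Type*} {K : Type} [Field K]

theorem latticeIdeal_eq_bot_iff [AddCommMonoid G] (c : Fin n → G) :
    latticeIdeal K c = ⊥ ↔ ∀ α β : Fin n →₀ ℕ, degS c α = degS c β → α = β := by
  rw [latticeIdeal, Ideal.span_eq_bot]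
  constructor
  · intro h α β hαβ
    have := h _ ⟨α, β, hαβ, rfl⟩
    rwa [sub_eq_zero, monomial_left_inj one_ne_zero] at this
  · rintro h _ ⟨α, β, hαβ, rfl⟩
    rw [h α β hαβ, sub_self]

variable (K) in
theorem ceq_eq_zero_iff_latticeIdeal_eq_bot [AddCommMonoid G] (a : Fin n → G) :
    ceq a = 0 ↔ latticeIdeal K (homogenize a) = ⊥ := by
  rw [latticeIdeal_eq_bot_iff]
  constructor
  · intro h u v huv
    obtain ⟨N, hN, hchain⟩ := exists_reflTransGen_of_ceq_lt (h ▸ zero_lt_one) huv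
    rw [Order.lt_one_iff] at hN
    subst hN
    clear huv
    induction hchain with
    | refl => rfl
    | tail _ hstep ih => exact ih.trans hstep.eq
  · intro h
    refine nonpos_iff_eq_zero.mp (ceq_le_of_forall_reflTransGen fun u v huv => ?_)
    rw [h u v huv]

theorem ceq_le_of_span_eq [AddCommMonoid G] {a : Fin n → G} {s : ℕ}
    {gα gβ : Fin s → Fin n →₀ ℕ}
    (hdeg : ∀ i, degS (homogenize a) (gα i) = degS (homogenize a) (gβ i))
    (hspan : Ideal.span (Set.range fun i => monomial (gα i) (1 : K) - monomial (gβ i) 1) =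
      latticeIdeal K (homogenize a))
    {D : ℕ∞} (hD : ∀ i, ∑ j, (gα i j : ℕ∞) ≤ D) : ceq a ≤ D := by
  refine ceq_le_of_forall_reflTransGen fun u v huv => ?_
  have hmem : monomial u (1 : K) - monomial v 1 ∈
      Ideal.span (Set.range fun i => monomial (gα i) (1 : K) - monomial (gβ i) 1) :=
    hspan ▸ Ideal.subset_span ⟨u, v, huv, rfl⟩
  refine (AddCon.addConGen_le (c := chainCon a D)).mpr ?_ (addConGen_of_monomial_sub_mem_span hmem)
  rintro _ _ ⟨i, rfl, rfl⟩
  refine .single ⟨hdeg i, le_trans ?_ (hD i)⟩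
  rw [← Nat.cast_sum, Nat.cast_le]
  exact factDist_le_sum _ _

theorem monomial_sub_mem_smul_latticeIdeal [AddCancelCommMonoid G] {a : Fin n → G}
    {u v : Fin n →₀ ℕ} (huv : degS (homogenize a) u = degS (homogenize a) v)
    (hlt : factDist u v < ∑ i, u i) :
    monomial u (1 : K) - monomial v 1 ∈
      RingHom.ker (constantCoeff (σ := Fin n) (R := K)) • latticeIdeal K (homogenize a) := by
  set c := u ⊓ v
  have hc : c ≠ 0 := by
    intro hc
    have hmin : ∑ i, min (u i) (v i) = 0 :=
      Finset.sum_eq_zero fun i _ => by simpa [c] using DFunLike.congr_fun hc i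
    have := factDist_add_sum_min u v
    omega
  have hsplit : monomial u (1 : K) - monomial v 1 =
      monomial c 1 * (monomial (u - c) 1 - monomial (v - c) 1) := by
    rw [mul_sub, monomial_mul, monomial_mul, one_mul, add_tsub_cancel_of_le inf_le_left,
      add_tsub_cancel_of_le inf_le_right]
  rw [hsplit, ← smul_eq_mul]
  refine Submodule.smul_mem_smul ?_ (Ideal.subset_span ⟨u - c, v - c, ?_, rfl⟩)
  · rw [RingHom.mem_ker, constantCoeff_monomial, if_neg hc]
  · apply add_left_cancel (a := degS (homogenize a) c)
    rw [← degS_add, ← degS_add, ← Finsupp.coe_add, ← Finsupp.coe_add,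
      add_tsub_cancel_of_le inf_le_left, add_tsub_cancel_of_le inf_le_right, huv]

theorem monomial_sub_mem_smul_latticeIdeal_of_reflTransGen [AddCancelCommMonoid G]
    {a : Fin n → G} {N : ℕ∞} {u v : Fin n →₀ ℕ} (h : ReflTransGen (ChainStep a N) u v)
    (hN : N < ∑ i, (u i : ℕ∞)) :
    monomial u (1 : K) - monomial v 1 ∈
      RingHom.ker (constantCoeff (σ := Fin n) (R := K)) • latticeIdeal K (homogenize a) := by
  induction h with
  | refl => rw [sub_self]; exact zero_mem _
  | @tail w v huw hwv ih =>
    have hsum : ∑ i, u i = ∑ i, w i :=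
      (degS_homogenize_eq_iff.mp (degS_homogenize_eq_of_reflTransGen huw)).2
    have hlt : factDist w v < ∑ i, w i := by
      rw [← hsum, ← Nat.cast_lt (α := ℕ∞), Nat.cast_sum]
      exact hwv.2.trans_lt hN
    rw [← sub_add_sub_cancel _ (monomial w 1)]
    exact add_mem ih (monomial_sub_mem_smul_latticeIdeal hwv.1 hlt)

theorem sum_le_ceq_of_minimal [AddCommGroup G] {a : Fin n → G} {s : ℕ}
    {gα gβ : Fin s → Fin n →₀ ℕ}
    (hdeg : ∀ i, degS (homogenize a) (gα i) = degS (homogenize a) (gβ i))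
    (hspan : Ideal.span (Set.range fun i => monomial (gα i) (1 : K) - monomial (gβ i) 1) =
      latticeIdeal K (homogenize a))
    (hmin : ∀ i, monomial (gα i) (1 : K) - monomial (gβ i) 1 ∉
      Ideal.span {f | ∃ i', i' ≠ i ∧ f = monomial (gα i') (1 : K) - monomial (gβ i') 1})
    (i : Fin s) : ∑ j, (gα i j : ℕ∞) ≤ ceq a := by
  by_contra! hlt
  obtain ⟨N, hN, hchain⟩ := exists_reflTransGen_of_ceq_lt hlt (hdeg i)
  have hmem := monomial_sub_mem_smul_latticeIdeal_of_reflTransGen (K := K) hchain hN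
  rw [← hspan] at hmem
  have hhom : ∀ i, IsWeightedHomogeneous (homogenize a)
      (monomial (gα i) (1 : K) - monomial (gβ i) 1) (Finsupp.weight (homogenize a) (gα i)) :=
    fun i => (isWeightedHomogeneous_monomial _ _ _ rfl).sub
      (isWeightedHomogeneous_monomial _ _ _ (by rw [weight_eq_degS, weight_eq_degS, hdeg i]))
  have hw : ∀ u : Fin n →₀ ℕ, Finsupp.weight (homogenize a) u = 0 → u = 0 :=
    fun _ => eq_zero_of_weight_homogenize_eq_zero
  exact hmin i (mem_span_others_of_mem_ker_constantCoeff_smul_span hw hhom hmem)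

end CatenaryDegree

theorem ceq_eq_max_degree_minimal_generators_general
    {m n : ℕ} {T : Type} [AddCommGroup T]
    (K : Type) [Field K]
    (a : Fin n → (Fin m → ℤ) × T) :
    (ceq a = 0 ↔
      latticeIdeal K (fun j => ((a j, (1 : ℤ)) : ((Fin m → ℤ) × T) × ℤ)) = ⊥)
    ∧ (∀ (s : ℕ) (gα gβ : Fin s → (Fin n →₀ ℕ)),
        (∀ i, gα i ≠ gβ i) →
        (∀ i, degS (fun j => ((a j, (1 : ℤ)) : ((Fin m → ℤ) × T) × ℤ)) ⇑(gα i) =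
              degS (fun j => ((a j, (1 : ℤ)) : ((Fin m → ℤ) × T) × ℤ)) ⇑(gβ i)) →
        Ideal.span (Set.range fun i => monomial (gα i) (1 : K) - monomial (gβ i) 1) =
          latticeIdeal K (fun j => ((a j, (1 : ℤ)) : ((Fin m → ℤ) × T) × ℤ)) →
        latticeIdeal K (fun j => ((a j, (1 : ℤ)) : ((Fin m → ℤ) × T) × ℤ)) ≠ ⊥ →
        ceq a ≤ (Finset.univ.sup (fun i : Fin s => ∑ j, gα i j) : ℕ∞))
    ∧ (∀ (s : ℕ) (gα gβ : Fin s → (Fin n →₀ ℕ)),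
        (∀ i, gα i ≠ gβ i) →
        (∀ i, degS (fun j => ((a j, (1 : ℤ)) : ((Fin m → ℤ) × T) × ℤ)) ⇑(gα i) =
              degS (fun j => ((a j, (1 : ℤ)) : ((Fin m → ℤ) × T) × ℤ)) ⇑(gβ i)) →
        Ideal.span (Set.range fun i => monomial (gα i) (1 : K) - monomial (gβ i) 1) =
          latticeIdeal K (fun j => ((a j, (1 : ℤ)) : ((Fin m → ℤ) × T) × ℤ)) →
        -- minimality: no generator lies in the ideal generated by the others:
        (∀ i, (monomial (gα i) (1 : K) - monomial (gβ i) 1) ∉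
          Ideal.span {f | ∃ i', i' ≠ i ∧
            f = monomial (gα i') (1 : K) - monomial (gβ i') 1}) →
        ceq a = (Finset.univ.sup (fun i : Fin s => ∑ j, gα i j) : ℕ∞)) := by
  have hmax : ∀ (s : ℕ) (gα : Fin s → Fin n →₀ ℕ) i,
      ∑ j, (gα i j : ℕ∞) ≤ Finset.univ.sup fun i : Fin s => ∑ j, (gα i j : ℕ∞) :=
    fun _ gα i => Finset.le_sup (f := fun i => ∑ j, (gα i j : ℕ∞)) (Finset.mem_univ i)
  refine ⟨ceq_eq_zero_iff_latticeIdeal_eq_bot K a, ?_, ?_⟩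
  · intro s gα gβ _ hdeg hspan _
    exact ceq_le_of_span_eq hdeg hspan (hmax s gα)
  · intro s gα gβ _ hdeg hspan hmin
    exact le_antisymm (ceq_le_of_span_eq hdeg hspan (hmax s gα))
      (Finset.sup_le fun i _ => sum_le_ceq_of_minimal hdeg hspan hmin i)

/-- **Theorem.** Let `S = ⟨a_1,…,a_n⟩ ⊆ ℤ^m ⊕ T` be a reduced monoid and
`S̃ = ⟨(a_1,1),…,(a_n,1)⟩`.
(1) `c_eq(S) = 0` iff `I_{S̃} = 0`;
(2) if `I_{S̃} ≠ 0` and `{f_1,…,f_s}` is a binomial generating set of `I_{S̃}`, then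
`c_eq(S) ≤ max_i deg(f_i)`;
(3) if `{f_1,…,f_s}` is a binomial minimal generating set of `I_{S̃}`, then
`c_eq(S) = max_i deg(f_i)`. -/
theorem ceq_eq_max_degree_minimal_generators
    {m n : ℕ} {T : Type} [AddCommGroup T] [Fintype T]
    (K : Type) [Field K]
    (a : Fin n → (Fin m → ℤ) × T)
    -- `S` is reduced:
    (hred : ∀ x, x ∈ AddSubmonoid.closure (Set.range a) →
      -x ∈ AddSubmonoid.closure (Set.range a) → x = 0)
    -- `a` is the minimal set of generators:
    (hmin : ∀ i, a i ∉ AddSubmonoid.closure (Set.range a \ {a i})) :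
    (ceq a = 0 ↔
      latticeIdeal K (fun j => ((a j, (1 : ℤ)) : ((Fin m → ℤ) × T) × ℤ)) = ⊥)
    ∧ (∀ (s : ℕ) (gα gβ : Fin s → (Fin n →₀ ℕ)),
        (∀ i, gα i ≠ gβ i) →
        (∀ i, degS (fun j => ((a j, (1 : ℤ)) : ((Fin m → ℤ) × T) × ℤ)) ⇑(gα i) =
              degS (fun j => ((a j, (1 : ℤ)) : ((Fin m → ℤ) × T) × ℤ)) ⇑(gβ i)) →
        Ideal.span (Set.range fun i => monomial (gα i) (1 : K) - monomial (gβ i) 1) =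
          latticeIdeal K (fun j => ((a j, (1 : ℤ)) : ((Fin m → ℤ) × T) × ℤ)) →
        latticeIdeal K (fun j => ((a j, (1 : ℤ)) : ((Fin m → ℤ) × T) × ℤ)) ≠ ⊥ →
        ceq a ≤ (Finset.univ.sup (fun i : Fin s => ∑ j, gα i j) : ℕ∞))
    ∧ (∀ (s : ℕ) (gα gβ : Fin s → (Fin n →₀ ℕ)),
        (∀ i, gα i ≠ gβ i) →
        (∀ i, degS (fun j => ((a j, (1 : ℤ)) : ((Fin m → ℤ) × T) × ℤ)) ⇑(gα i) =
              degS (fun j => ((a j, (1 : ℤ)) : ((Fin m → ℤ) × T) × ℤ)) ⇑(gβ i)) →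
        Ideal.span (Set.range fun i => monomial (gα i) (1 : K) - monomial (gβ i) 1) =
          latticeIdeal K (fun j => ((a j, (1 : ℤ)) : ((Fin m → ℤ) × T) × ℤ)) →
        -- minimality: no generator lies in the ideal generated by the others:
        (∀ i, (monomial (gα i) (1 : K) - monomial (gβ i) 1) ∉
          Ideal.span {f | ∃ i', i' ≠ i ∧
            f = monomial (gα i') (1 : K) - monomial (gβ i') 1}) →
        ceq a = (Finset.univ.sup (fun i : Fin s => ∑ j, gα i j) : ℕ∞)) :=
  ceq_eq_max_degree_minimal_generators_general K a
end

section
/- Let S = ⟨b, b + t m_1, …, b + t m_n⟩ be a numerical semigroup, where b, t ∈ ℤ^+ and m_i = ∏_{j ≠ i, 1≤j≤n} c_j, with c_1 > c_2 > ⋯ > c_n ≥ 2 pairwise relatively prime integers. Then L_S = c_{n−1} (b + t m_{n−1}) + S. -/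
/-- The set of elements of `S = ⟨a_1,…,a_k⟩` having at least two different factorizations
of the same length. -/
def LSet {n : ℕ} {G : Type*} [AddCommMonoid G] (a : Fin n → G) : Set G :=
  {x | ∃ lam nu : Fin n → ℕ, lam ≠ nu ∧ degS a lam = x ∧ degS a nu = x ∧
    ∑ i, lam i = ∑ i, nu i}

/-!
Every generator of `⟨b, b + t m_1, …, b + t m_n⟩` is `b` plus a multiple of `t`, so for two
factorizations of the same element with the same length, the difference `d` of their
exponents of the `b + t m_i` satisfies `∑ d_i m_i = 0`. As `c_k` divides every `m_i` with
`i ≠ k` and is prime to `m_k`, each `d_k` is a multiple `c_k e_k`, and dividing by `∏ c_j`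
gives `∑ e_k = 0`. Hence one factorization uses some `b + t m_i` at least `c_i` times and the
other some `b + t m_j`, `j ≠ i`, at least `c_j` times, and one of `i, j` is not `n`. Since
`c_k (b + t m_k) = c_k b + t ∏ c_j` for every `k`, any `c_k (b + t m_k)` with
`c_k ≥ c_{n-1}` lies in `c_{n-1} (b + t m_{n-1}) + S`, while
`c_{n-1} (b + t m_{n-1}) = (c_{n-1} - c_n) b + c_n (b + t m_n)` lies in `L_S`.
-/

open Finset

section ProdErase

variable {ι : Type*} [Fintype ι] [DecidableEq ι]

theorem dvd_of_sum_mul_prod_erase_eq_zero {c d : ι → ℤ}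
    (hc : Pairwise fun i j => IsCoprime (c i) (c j))
    (hd : ∑ i, d i * ∏ j ∈ univ.erase i, c j = 0) (k : ι) : c k ∣ d k := by
  have hcop : IsCoprime (c k) (∏ j ∈ univ.erase k, c j) :=
    IsCoprime.prod_right fun j hj => hc (ne_of_mem_erase hj).symm
  refine hcop.dvd_of_dvd_mul_right ?_
  have hsplit := add_sum_erase univ (fun i => d i * ∏ j ∈ univ.erase i, c j) (mem_univ k)
  rw [hd, add_eq_zero_iff_eq_neg] at hsplit
  rw [hsplit, dvd_neg]
  exact dvd_sum fun i hi =>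
    (dvd_prod_of_mem c (mem_erase.2 ⟨(ne_of_mem_erase hi).symm, mem_univ k⟩)).mul_left _

theorem sum_eq_zero_of_sum_mul_mul_prod_erase_eq_zero {c e : ι → ℤ} (hc : ∀ i, c i ≠ 0)
    (he : ∑ i, c i * e i * ∏ j ∈ univ.erase i, c j = 0) : ∑ i, e i = 0 := by
  have hprod : (∑ i, e i) * ∏ j, c j = 0 := by
    rw [sum_mul, ← he]
    refine sum_congr rfl fun i _ => ?_
    rw [← mul_prod_erase univ c (mem_univ i)]
    ring
  exact (mul_eq_zero.1 hprod).resolve_right (prod_ne_zero_iff.2 fun i _ => hc i)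

theorem exists_ne_le_le_of_sum_mul_prod_erase_eq {c u v : ι → ℕ}
    (hc : Pairwise fun i j => Nat.Coprime (c i) (c j)) (hpos : ∀ i, 0 < c i)
    (huv : ∑ i, u i * ∏ j ∈ univ.erase i, c j = ∑ i, v i * ∏ j ∈ univ.erase i, c j)
    (hne : u ≠ v) : ∃ i j, i ≠ j ∧ c i ≤ u i ∧ c j ≤ v j := by
  set d : ι → ℤ := fun i => u i - v i
  have hd : ∑ i, d i * ∏ j ∈ univ.erase i, (c j : ℤ) = 0 := by
    simp only [d, sub_mul, sum_sub_distrib, sub_eq_zero]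
    exact_mod_cast huv
  choose e he using dvd_of_sum_mul_prod_erase_eq_zero
    (fun i j h => Nat.isCoprime_iff_coprime.2 (hc h)) hd
  have hsum : ∑ i, e i = 0 :=
    sum_eq_zero_of_sum_mul_mul_prod_erase_eq_zero (c := fun i => (c i : ℤ))
      (fun i => Int.natCast_ne_zero.2 (hpos i).ne') (by simpa only [he] using hd)
  have hne' : ∃ i ∈ univ, e i ≠ 0 := by
    by_contra! h
    refine hne (funext fun i => ?_)
    have := he i
    simp only [d, h i (mem_univ i), mul_zero, sub_eq_zero] at this
    exact_mod_cast this
  obtain ⟨i, -, hi⟩ := exists_pos_of_sum_zero_of_exists_nonzero e hsum hne'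
  obtain ⟨k, hk, hek⟩ := hne'
  obtain ⟨j, -, hj⟩ := exists_pos_of_sum_zero_of_exists_nonzero (-e)
    (by simp only [Pi.neg_apply, sum_neg_distrib, hsum, neg_zero]) ⟨k, hk, neg_ne_zero.2 hek⟩
  have hj : 1 ≤ -e j := hj
  refine ⟨i, j, fun hij => by subst hij; omega, ?_, ?_⟩
  · have hci : (c i : ℤ) ≤ c i * e i := le_mul_of_one_le_right (by positivity) hi
    have := he i
    have : (0 : ℤ) ≤ v i := by positivity
    exact_mod_cast (by linarith : (c i : ℤ) ≤ u i)
  · have hcj : (c j : ℤ) ≤ c j * -e j := le_mul_of_one_le_right (by positivity) hj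
    have := he j
    have : (0 : ℤ) ≤ u j := by positivity
    exact_mod_cast (by linarith : (c j : ℤ) ≤ v j)

end ProdErase

section Factorizations

variable {k : ℕ} {G : Type*} [AddCommMonoid G] {a : Fin k → G}

theorem degS_add_s19 (l μ : Fin k → ℕ) : degS a (l + μ) = degS a l + degS a μ := by
  simp only [degS, Pi.add_apply, add_smul, sum_add_distrib]

theorem degS_single (i : Fin k) (c : ℕ) : degS a (Pi.single i c) = c • a i := by
  simp [degS, Pi.single_apply]

theorem mem_closure_range_iff_exists_degS {x : G} :
    x ∈ AddSubmonoid.closure (Set.range a) ↔ ∃ μ, degS a μ = x := by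
  simp only [AddSubmonoid.mem_closure_range_iff_of_fintype, degS, eq_comm]

theorem degS_mem_closure_range (μ : Fin k → ℕ) :
    degS a μ ∈ AddSubmonoid.closure (Set.range a) :=
  mem_closure_range_iff_exists_degS.2 ⟨μ, rfl⟩

theorem exists_degS_eq_nsmul_add_of_le {μ : Fin k → ℕ} {i : Fin k} {c : ℕ} (h : c ≤ μ i) :
    ∃ y ∈ AddSubmonoid.closure (Set.range a), degS a μ = c • a i + y := by
  refine ⟨degS a (μ - Pi.single i c), degS_mem_closure_range _, ?_⟩
  rw [← degS_single, ← degS_add_s19]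
  congr 1
  funext j
  by_cases hj : j = i
  · subst hj; simp only [Pi.add_apply, Pi.sub_apply, Pi.single_eq_same]; omega
  · simp [Pi.single_eq_of_ne hj]

theorem add_mem_LSet {z y : G} (hz : z ∈ LSet a) (hy : y ∈ AddSubmonoid.closure (Set.range a)) :
    z + y ∈ LSet a := by
  obtain ⟨lam, nu, hne, hlam, hnu, hlen⟩ := hz
  obtain ⟨μ, rfl⟩ := mem_closure_range_iff_exists_degS.1 hy
  refine ⟨lam + μ, nu + μ, fun h => hne (add_right_cancel h), ?_, ?_, ?_⟩
  · rw [degS_add_s19, hlam]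
  · rw [degS_add_s19, hnu]
  · simp only [Pi.add_apply, sum_add_distrib, hlen]

end Factorizations

def shiftedGens {n : ℕ} (b t : ℕ) (m : Fin n → ℕ) : Fin (n + 1) → ℕ :=
  Fin.cons b fun i => b + t * m i

section ShiftedGens

variable {n b t : ℕ} {c m : Fin n → ℕ}

@[simp]
theorem shiftedGens_zero : shiftedGens b t m 0 = b := rfl

@[simp]
theorem shiftedGens_succ (i : Fin n) : shiftedGens b t m i.succ = b + t * m i := rfl

theorem degS_shiftedGens (μ : Fin (n + 1) → ℕ) :
    degS (shiftedGens b t m) μ = (∑ i, μ i) * b + t * ∑ i, μ i.succ * m i := by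
  simp only [degS, smul_eq_mul, Fin.sum_univ_succ, shiftedGens_zero, shiftedGens_succ, mul_add,
    sum_add_distrib, add_mul, sum_mul, mul_sum]
  rw [add_assoc]
  exact congrArg _ (congrArg _ (sum_congr rfl fun i _ => mul_left_comm _ _ _))

theorem mul_add_mul_eq_tsub_mul_add {k l : Fin n} (hcm : c k * m k = c l * m l)
    (hlk : c l ≤ c k) : c k * (b + t * m k) = (c k - c l) * b + c l * (b + t * m l) := by
  have hcm' : (c k : ℤ) * m k = c l * m l := by exact_mod_cast hcm
  zify [hlk]
  linear_combination (t : ℤ) * hcm'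

theorem exists_degS_shiftedGens_eq_add {k l : Fin n} {μ : Fin (n + 1) → ℕ}
    (hcm : c k * m k = c l * m l) (hlk : c l ≤ c k) (hk : c k ≤ μ k.succ) :
    ∃ y ∈ AddSubmonoid.closure (Set.range (shiftedGens b t m)),
      degS (shiftedGens b t m) μ = c l * (b + t * m l) + y := by
  obtain ⟨y, hy, hμ⟩ := exists_degS_eq_nsmul_add_of_le (a := shiftedGens b t m) hk
  have hb : b ∈ AddSubmonoid.closure (Set.range (shiftedGens b t m)) :=
    AddSubmonoid.subset_closure ⟨0, rfl⟩
  refine ⟨(c k - c l) • b + y, add_mem (nsmul_mem hb _) hy, ?_⟩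
  rw [hμ, smul_eq_mul, smul_eq_mul, shiftedGens_succ, mul_add_mul_eq_tsub_mul_add hcm hlk]
  ring

theorem mul_add_mem_LSet_shiftedGens {k l : Fin n} (hcm : c k * m k = c l * m l)
    (hlk : c l < c k) : c k * (b + t * m k) ∈ LSet (shiftedGens b t m) := by
  have hkl : k ≠ l := by rintro rfl; omega
  refine ⟨Pi.single k.succ (c k), Pi.single 0 (c k - c l) + Pi.single l.succ (c l),
    fun h => ?_, ?_, ?_, ?_⟩
  · have := congrFun h k.succ
    simp only [Pi.add_apply, Pi.single_eq_same, Pi.single_eq_of_ne (Fin.succ_ne_zero k),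
      Pi.single_eq_of_ne ((Fin.succ_injective _).ne hkl)] at this
    omega
  · rw [degS_single, smul_eq_mul, shiftedGens_succ]
  · rw [degS_add_s19, degS_single, degS_single, smul_eq_mul, smul_eq_mul, shiftedGens_zero,
      shiftedGens_succ, mul_add_mul_eq_tsub_mul_add hcm hlk.le]
  · simp only [Pi.add_apply, sum_add_distrib, sum_pi_single', mem_univ, if_true]
    omega

theorem exists_ne_le_of_mem_LSet_shiftedGens {x : ℕ} (ht : 0 < t)
    (hc : Pairwise fun i j => Nat.Coprime (c i) (c j)) (hpos : ∀ i, 0 < c i)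
    (hm : ∀ i, m i = ∏ j ∈ univ.erase i, c j) (hx : x ∈ LSet (shiftedGens b t m))
    (q : Fin n) :
    ∃ k ≠ q, ∃ μ, degS (shiftedGens b t m) μ = x ∧ c k ≤ μ k.succ := by
  obtain ⟨lam, nu, hne, rfl, hnu, hlen⟩ := hx
  have htail : ∑ i, lam i.succ * m i = ∑ i, nu i.succ * m i := by
    rw [degS_shiftedGens, degS_shiftedGens, hlen, add_right_inj] at hnu
    exact (Nat.eq_of_mul_eq_mul_left ht hnu).symm
  have hne_tail : (fun i : Fin n => lam i.succ) ≠ fun i => nu i.succ := by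
    intro h
    have h0 : lam 0 = nu 0 := by
      have hs : ∑ i : Fin n, lam i.succ = ∑ i : Fin n, nu i.succ :=
        congrArg (fun f : Fin n → ℕ => ∑ i, f i) h
      rw [Fin.sum_univ_succ, Fin.sum_univ_succ, hs] at hlen
      omega
    exact hne (funext fun i => Fin.cases h0 (fun i => congrFun h i) i)
  simp only [hm] at htail
  obtain ⟨i, j, hij, hi, hj⟩ := exists_ne_le_le_of_sum_mul_prod_erase_eq hc hpos htail hne_tail
  by_cases hiq : i = q
  · exact ⟨j, hiq ▸ hij.symm, nu, hnu, hj⟩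
  · exact ⟨i, hiq, lam, rfl, hi⟩

end ShiftedGens

/-- **Corollary.** Let `S = ⟨b, b + t m_1, …, b + t m_n⟩` be a numerical semigroup with
`b, t ∈ ℤ⁺` and `m_i = ∏_{j ≠ i} c_j`, where `c_1 > ⋯ > c_n ≥ 2` are pairwise relatively
prime integers.  Then `L_S = c_{n-1} (b + t m_{n-1}) + S`. -/
theorem LSet_shifted_unique_Betti
    {n : ℕ} (hn : 2 ≤ n)
    (b t : ℕ) (ht : 0 < t)
    (cs m : Fin n → ℕ)
    (hm : ∀ i, m i = ∏ j ∈ Finset.univ.erase i, cs j)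
    -- `c_1 > c_2 > ⋯ > c_n`:
    (hanti : ∀ i j : Fin n, i < j → cs j < cs i)
    -- `c_n ≥ 2`:
    (h2 : 2 ≤ cs ⟨n - 1, by omega⟩)
    -- pairwise relatively prime:
    (hcs : ∀ i j, i ≠ j → Nat.Coprime (cs i) (cs j))
    -- the generating family `A = (b, b + t m_1, …, b + t m_n)`:
    (A : Fin (n + 1) → ℕ) (hA : A = Fin.cons b (fun i => b + t * m i)) :
    LSet A = {x | ∃ y ∈ AddSubmonoid.closure (Set.range A),
      x = cs ⟨n - 2, by omega⟩ * (b + t * m ⟨n - 2, by omega⟩) + y} := by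
  obtain rfl : A = shiftedGens b t m := hA
  set p : Fin n := ⟨n - 2, by omega⟩
  set q : Fin n := ⟨n - 1, by omega⟩
  have hpos : ∀ i, 0 < cs i := fun i => by
    rcases (show i ≤ q from Fin.le_def.2 (by simp only [q]; omega)).lt_or_eq with h | rfl
    · have := hanti i q h; omega
    · omega
  have hcm : ∀ i j, cs i * m i = cs j * m j := fun i j => by
    rw [hm, hm, mul_prod_erase _ _ (mem_univ i), mul_prod_erase _ _ (mem_univ j)]
  have hp_le : ∀ k ≠ q, cs p ≤ cs k := fun k hk => by
    rcases (show k ≤ p from Fin.le_def.2 (by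
      have := Fin.val_ne_of_ne hk; simp only [p, q] at this ⊢; omega)).lt_or_eq with h | rfl
    · exact (hanti k p h).le
    · exact le_rfl
  ext x
  constructor
  · intro hx
    obtain ⟨k, hkq, μ, rfl, hk⟩ := exists_ne_le_of_mem_LSet_shiftedGens ht hcs hpos hm hx q
    exact exists_degS_shiftedGens_eq_add (hcm k p) (hp_le k hkq) hk
  · rintro ⟨y, hy, rfl⟩
    have hqp : cs q < cs p := hanti p q (Fin.lt_def.2 (by simp only [p, q]; omega))
    exact add_mem_LSet (mul_add_mem_LSet_shiftedGens (hcm p q) hqp) hy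
end
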